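/- Let U = {x ∈ ℝ⁴ : (x₁,x₂,x₃) ≠ (0,0,0)} and define φ : U → ℝ² by φ(x₁,x₂,x₃,x₄) = (√(x₁² + x₂² + x₃²), x₄). Then φ is a proper biharmonic Riemannian submersion: (i) for every p ∈ U the derivative Dφ_p is surjective and restricts to a linear isometry on (ker Dφ_p)^⊥; (ii) each component of φ satisfies Δ(Δφᵢ) = 0 on U; and (iii) Δφ (taken componentwise) is nonzero at every point of U. -/

import Mathlib

/-- The Euclidean Laplacian of a real-valued function on `ℝⁿ`:
the trace of the second (Fréchet) derivative, i.e. the sum of the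
second partial derivatives in the coordinate directions. -/
noncomputable def eLaplacian {n : ℕ} (f : EuclideanSpace ℝ (Fin n) → ℝ)
    (x : EuclideanSpace ℝ (Fin n)) : ℝ :=
  ∑ i : Fin n,
    iteratedFDeriv ℝ 2 f x ![EuclideanSpace.single i (1 : ℝ), EuclideanSpace.single i (1 : ℝ)]

/-- The map `φ : ℝ⁴ → ℝ²`, `φ(x₁,x₂,x₃,x₄) = (√(x₁² + x₂² + x₃²), x₄)`. -/
noncomputable def phiMap (x : EuclideanSpace ℝ (Fin 4)) : EuclideanSpace ℝ (Fin 2) :=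
  WithLp.toLp 2 ![Real.sqrt ((x 0) ^ 2 + (x 1) ^ 2 + (x 2) ^ 2), x 3]

open EuclideanSpace
noncomputable abbrev E4 := EuclideanSpace ℝ (Fin 4)
noncomputable def Tb : E4 →L[ℝ] E4 →L[ℝ] ℝ :=
  (EuclideanSpace.proj 0).smulRight (EuclideanSpace.proj 0) +
  (EuclideanSpace.proj 1).smulRight (EuclideanSpace.proj 1) +
  (EuclideanSpace.proj 2).smulRight (EuclideanSpace.proj 2)
lemma Tb_apply (x v : E4) : Tb x v = x 0 * v 0 + x 1 * v 1 + x 2 * v 2 := by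
  simp [Tb, mul_comm]
def qf (x : E4) : ℝ := x 0 ^ 2 + x 1 ^ 2 + x 2 ^ 2
lemma qf_nonneg (x : E4) : 0 ≤ qf x := by unfold qf; positivity
lemma sqrt_qf_pos {x : E4} (hx : qf x ≠ 0) : 0 < Real.sqrt (qf x) :=
  Real.sqrt_pos.2 (lt_of_le_of_ne (qf_nonneg x) (Ne.symm hx))
lemma sq_sqrt_qf (x : E4) : Real.sqrt (qf x) ^ 2 = qf x := Real.sq_sqrt (qf_nonneg x)
lemma hasFDerivAt_coord0 (x : E4) (i : Fin 4) :
    HasFDerivAt (fun y : E4 => y i) (EuclideanSpace.proj (𝕜 := ℝ) i) x := by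
  simpa using (EuclideanSpace.proj (𝕜 := ℝ) i).hasFDerivAt (x := x)
lemma hasFDerivAt_qf (x : E4) : HasFDerivAt qf ((2:ℝ) • Tb x) x := by
  have h := hasFDerivAt_coord0 x
  have h2 : ∀ i : Fin 4, HasFDerivAt (fun y : E4 => y i ^ 2)
      ((2 * x i) • EuclideanSpace.proj (𝕜 := ℝ) i) x := by
    intro i
    have := (h i).mul (h i)
    convert this using 1 <;> try rfl
    · funext y; rw [Pi.mul_apply]; ring
    · ext v; simp; ring
  have := ((h2 0).add (h2 1)).add (h2 2)
  convert this using 1 <;> try rfl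
  ext v
  simp [Tb_apply]
  ring
lemma hasFDerivAt_sqrt_qf {x : E4} (hx : qf x ≠ 0) :
    HasFDerivAt (fun y => Real.sqrt (qf y)) ((Real.sqrt (qf x))⁻¹ • Tb x) x := by
  have := (hasFDerivAt_qf x).sqrt hx
  convert this using 1 <;> try rfl
  rw [smul_smul]
  congr 1
  have := (sqrt_qf_pos hx).ne'
  field_simp

-- derivative of (√(qf x))⁻¹
lemma hasFDerivAt_inv_sqrt_qf {x : E4} (hx : qf x ≠ 0) :
    HasFDerivAt (fun y => (Real.sqrt (qf y))⁻¹)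
      ((-((qf x)⁻¹ * (Real.sqrt (qf x))⁻¹)) • Tb x) x := by
  have hr := (sqrt_qf_pos hx).ne'
  have := (hasDerivAt_inv hr).comp_hasFDerivAt x (hasFDerivAt_sqrt_qf hx)
  convert this using 1 <;> try rfl
  rw [smul_smul]
  congr 1
  rw [← sq_sqrt_qf x]
  field_simp
  rw [Real.sqrt_sq (Real.sqrt_nonneg _)]
-- derivative of (qf x)⁻¹
lemma hasFDerivAt_inv_qf {x : E4} (hx : qf x ≠ 0) :
    HasFDerivAt (fun y => (qf y)⁻¹) ((-(2 * ((qf x)^2)⁻¹)) • Tb x) x := by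
  have := (hasDerivAt_inv hx).comp_hasFDerivAt x (hasFDerivAt_qf x)
  convert this using 1 <;> try rfl
  rw [smul_smul]
  congr 1
  ring

lemma continuous_qf : Continuous qf := by unfold qf; fun_prop


lemma eLaplacian_eq {n : ℕ} (f : EuclideanSpace ℝ (Fin n) → ℝ) (x : EuclideanSpace ℝ (Fin n)) :
    eLaplacian f x = ∑ i : Fin n,
      fderiv ℝ (fderiv ℝ f) x (EuclideanSpace.single i (1:ℝ)) (EuclideanSpace.single i (1:ℝ)) := by
  unfold eLaplacian
  simp [iteratedFDeriv_two_apply]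

lemma isOpen_U : IsOpen {x : E4 | qf x ≠ 0} :=
  isOpen_ne.preimage continuous_qf

lemma fderiv_sqrt_qf_eventually {p : E4} (hp : qf p ≠ 0) :
    fderiv ℝ (fun y => Real.sqrt (qf y)) =ᶠ[nhds p]
      (fun x => (Real.sqrt (qf x))⁻¹ • Tb x) := by
  filter_upwards [isOpen_U.mem_nhds hp] with x hx
  exact (hasFDerivAt_sqrt_qf hx).fderiv

lemma eLaplacian_sqrt_qf {p : E4} (hp : qf p ≠ 0) :
    eLaplacian (fun y => Real.sqrt (qf y)) p = 2 * (Real.sqrt (qf p))⁻¹ := by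
  have hG : HasFDerivAt (fun x => (Real.sqrt (qf x))⁻¹ • Tb x)
      ((Real.sqrt (qf p))⁻¹ • Tb +
        ((-((qf p)⁻¹ * (Real.sqrt (qf p))⁻¹)) • Tb p).smulRight (Tb p)) p :=
    (hasFDerivAt_inv_sqrt_qf hp).smul (Tb.hasFDerivAt)
  have h2 : fderiv ℝ (fderiv ℝ (fun y => Real.sqrt (qf y))) p =
      (Real.sqrt (qf p))⁻¹ • Tb +
        ((-((qf p)⁻¹ * (Real.sqrt (qf p))⁻¹)) • Tb p).smulRight (Tb p) := by
    rw [(fderiv_sqrt_qf_eventually hp).fderiv_eq]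
    exact hG.fderiv
  rw [eLaplacian_eq]
  simp only [h2]
  simp only [ContinuousLinearMap.add_apply, ContinuousLinearMap.smul_apply,
    ContinuousLinearMap.smulRight_apply, smul_eq_mul, Fin.sum_univ_four, Tb_apply]
  simp [EuclideanSpace.single_apply]
  have hr := (sqrt_qf_pos hp).ne'
  have key : p 0 * p 0 + p 1 * p 1 + p 2 * p 2 = Real.sqrt (qf p) ^ 2 := by
    rw [sq_sqrt_qf]; unfold qf; ring
  rw [show (qf p) = Real.sqrt (qf p) ^ 2 from (sq_sqrt_qf p).symm]
  field_simp
  linear_combination (-1) * key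

lemma hasFDerivAt_two_inv_sqrt_qf {x : E4} (hx : qf x ≠ 0) :
    HasFDerivAt (fun y => 2 * (Real.sqrt (qf y))⁻¹)
      ((-(2 * ((qf x)⁻¹ * (Real.sqrt (qf x))⁻¹))) • Tb x) x := by
  have := (hasFDerivAt_inv_sqrt_qf hx).const_mul (2:ℝ)
  convert this using 1 <;> try rfl
  rw [smul_smul]
  congr 1
  ring

lemma fderiv_lap_eventually {p : E4} (hp : qf p ≠ 0) :
    fderiv ℝ (eLaplacian (fun y => Real.sqrt (qf y))) =ᶠ[nhds p]
      (fun x => (-(2 * ((qf x)⁻¹ * (Real.sqrt (qf x))⁻¹))) • Tb x) := by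
  have ev0 : eLaplacian (fun y => Real.sqrt (qf y)) =ᶠ[nhds p]
      (fun x => 2 * (Real.sqrt (qf x))⁻¹) := by
    filter_upwards [isOpen_U.mem_nhds hp] with x hx
    exact eLaplacian_sqrt_qf hx
  refine (ev0.fderiv).trans ?_
  filter_upwards [isOpen_U.mem_nhds hp] with x hx
  exact (hasFDerivAt_two_inv_sqrt_qf hx).fderiv

lemma eLaplacian_eLaplacian_sqrt_qf {p : E4} (hp : qf p ≠ 0) :
    eLaplacian (eLaplacian (fun y => Real.sqrt (qf y))) p = 0 := by
  have hr := (sqrt_qf_pos hp).ne'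
  have hm : HasFDerivAt (fun y => -(2 * ((qf y)⁻¹ * (Real.sqrt (qf y))⁻¹)))
      (-((2:ℝ) • ((qf p)⁻¹ • ((-((qf p)⁻¹ * (Real.sqrt (qf p))⁻¹)) • Tb p) +
        (Real.sqrt (qf p))⁻¹ • ((-(2 * ((qf p)^2)⁻¹)) • Tb p)))) p :=
    (((hasFDerivAt_inv_qf hp).mul (hasFDerivAt_inv_sqrt_qf hp)).const_mul (2:ℝ)).neg
  have hK : HasFDerivAt (fun x => (-(2 * ((qf x)⁻¹ * (Real.sqrt (qf x))⁻¹))) • Tb x)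
      ((-(2 * ((qf p)⁻¹ * (Real.sqrt (qf p))⁻¹))) • Tb +
        (-((2:ℝ) • ((qf p)⁻¹ • ((-((qf p)⁻¹ * (Real.sqrt (qf p))⁻¹)) • Tb p) +
          (Real.sqrt (qf p))⁻¹ • ((-(2 * ((qf p)^2)⁻¹)) • Tb p)))).smulRight (Tb p)) p :=
    hm.smul (Tb.hasFDerivAt)
  have h2 := (fderiv_lap_eventually hp).fderiv_eq.trans hK.fderiv
  rw [eLaplacian_eq]
  simp only [h2]
  simp only [ContinuousLinearMap.add_apply, ContinuousLinearMap.smul_apply,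
    ContinuousLinearMap.smulRight_apply, ContinuousLinearMap.neg_apply, smul_eq_mul,
    Fin.sum_univ_four, Tb_apply]
  simp [EuclideanSpace.single_apply]
  have key : p 0 * p 0 + p 1 * p 1 + p 2 * p 2 = Real.sqrt (qf p) ^ 2 := by
    rw [sq_sqrt_qf]; unfold qf; ring
  rw [show (qf p) = Real.sqrt (qf p) ^ 2 from (sq_sqrt_qf p).symm]
  field_simp
  linear_combination 6 * key

lemma hasFDerivAt_coord (x : E4) (i : Fin 4) :
    HasFDerivAt (fun y : E4 => y i) (EuclideanSpace.proj (𝕜 := ℝ) i) x := by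
  simpa using (EuclideanSpace.proj (𝕜 := ℝ) i).hasFDerivAt (x := x)

lemma fderiv_coord3 : fderiv ℝ (fun y : E4 => y 3) = fun _ => EuclideanSpace.proj (𝕜 := ℝ) 3 := by
  funext x
  exact (hasFDerivAt_coord x 3).fderiv

lemma eLaplacian_coord3 (x : E4) : eLaplacian (fun y : E4 => y 3) x = 0 := by
  rw [eLaplacian_eq, fderiv_coord3]
  simp [fderiv_const]

lemma eLaplacian_zero (x : E4) : eLaplacian (fun _ : E4 => (0:ℝ)) x = 0 := by
  rw [eLaplacian_eq]
  have h0 : fderiv ℝ (fun _ : E4 => (0:ℝ)) = fun _ => (0 : E4 →L[ℝ] ℝ) := by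
    funext x; exact fderiv_const_apply 0
  rw [h0]
  have h1 : fderiv ℝ (fun _ : E4 => (0 : E4 →L[ℝ] ℝ)) x = 0 := fderiv_const_apply 0
  simp [h1]

noncomputable def Amap (p : E4) : E4 →L[ℝ] EuclideanSpace ℝ (Fin 2) :=
  ((EuclideanSpace.equiv (Fin 2) ℝ).symm.toContinuousLinearMap).comp
    (ContinuousLinearMap.pi ![(Real.sqrt (qf p))⁻¹ • Tb p, EuclideanSpace.proj 3])

lemma Amap_apply_zero (p v : E4) : Amap p v 0 = (Real.sqrt (qf p))⁻¹ * Tb p v := rfl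
lemma Amap_apply_one (p v : E4) : Amap p v 1 = v 3 := rfl

lemma hasFDerivAt_phiMap {p : E4} (hp : qf p ≠ 0) : HasFDerivAt phiMap (Amap p) p := by
  have hpi : HasFDerivAt (fun x : E4 => (fun i => ![Real.sqrt (qf x), x 3] i : Fin 2 → ℝ))
      (ContinuousLinearMap.pi ![(Real.sqrt (qf p))⁻¹ • Tb p, EuclideanSpace.proj 3]) p := by
    apply hasFDerivAt_pi''
    intro i
    fin_cases i
    · simpa using hasFDerivAt_sqrt_qf hp
    · simpa using hasFDerivAt_coord p 3
  have := ((EuclideanSpace.equiv (Fin 2) ℝ).symm.toContinuousLinearMap.hasFDerivAt).comp p hpi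
  convert this using 1 <;> try rfl

lemma key_qf (p : E4) : p 0 * p 0 + p 1 * p 1 + p 2 * p 2 = Real.sqrt (qf p) ^ 2 := by
  rw [sq_sqrt_qf]; unfold qf; ring

lemma Amap_surjective {p : E4} (hp : qf p ≠ 0) : Function.Surjective (Amap p) := by
  intro w
  have hr := (sqrt_qf_pos hp).ne'
  refine ⟨((w 0) * (Real.sqrt (qf p))⁻¹) •
    (EuclideanSpace.single 0 (p 0) + EuclideanSpace.single 1 (p 1) +
      EuclideanSpace.single 2 (p 2)) + (w 1) • EuclideanSpace.single 3 (1:ℝ), ?_⟩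
  ext i
  match i with
  | 0 =>
    rw [Amap_apply_zero]
    simp [Tb_apply, EuclideanSpace.single_apply]
    field_simp
    linear_combination w 0 * key_qf p
  | 1 =>
    rw [Amap_apply_one]
    simp [EuclideanSpace.single_apply]

open scoped RealInnerProductSpace in
lemma Amap_isometry {p : E4} (hp : qf p ≠ 0) :
    ∀ v ∈ (LinearMap.ker (Amap p).toLinearMap)ᗮ, ‖Amap p v‖ = ‖v‖ := by
  intro v hv
  have hr := (sqrt_qf_pos hp).ne'
  obtain ⟨r, hrdef⟩ : ∃ r, r = Real.sqrt (qf p) := ⟨_, rfl⟩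
  obtain ⟨α, hα⟩ : ∃ a, a = r⁻¹ * Tb p v := ⟨_, rfl⟩
  obtain ⟨β, hβ⟩ : ∃ b, b = v 3 := ⟨_, rfl⟩
  obtain ⟨pvec, hpvec⟩ : ∃ z : E4, z = EuclideanSpace.single 0 (p 0) +
      EuclideanSpace.single 1 (p 1) + EuclideanSpace.single 2 (p 2) := ⟨_, rfl⟩
  obtain ⟨u, hu⟩ : ∃ u : E4, u = r⁻¹ • pvec := ⟨_, rfl⟩
  obtain ⟨e3, he3⟩ : ∃ z : E4, z = EuclideanSpace.single 3 (1:ℝ) := ⟨_, rfl⟩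
  obtain ⟨w, hw⟩ : ∃ w : E4, w = v - α • u - β • e3 := ⟨_, rfl⟩
  rw [← hrdef] at hr
  have hTbu : Tb p u = r := by
    have h1 : Tb p u = r⁻¹ * (p 0 * p 0 + p 1 * p 1 + p 2 * p 2) := by
      simp [hu, hpvec, Tb_apply, EuclideanSpace.single_apply]
      ring
    rw [h1, key_qf p, ← hrdef, sq, inv_mul_cancel_left₀ hr]
  have hTbe3 : Tb p e3 = 0 := by
    simp [he3, Tb_apply, EuclideanSpace.single_apply]
  have hu3 : u 3 = 0 := by
    simp [hu, hpvec, EuclideanSpace.single_apply]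
  have he33 : e3 3 = 1 := by
    simp [he3, EuclideanSpace.single_apply]
  have hker : w ∈ LinearMap.ker (Amap p).toLinearMap := by
    have hA : Amap p w = 0 := by
      ext i
      match i with
      | 0 =>
        show Amap p w 0 = (0:ℝ)
        rw [Amap_apply_zero, hw]
        simp only [map_sub, map_smul, smul_eq_mul, hTbu, hTbe3]
        rw [hα]
        field_simp
        ring
      | 1 =>
        show Amap p w 1 = (0:ℝ)
        rw [Amap_apply_one, hw]
        simp only [PiLp.sub_apply, PiLp.smul_apply, hu3, he33, smul_eq_mul,
          mul_zero, mul_one, hβ]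
        ring
    exact LinearMap.mem_ker.2 hA
  have hip : ⟪w, v⟫ = 0 := (Submodule.mem_orthogonal _ _).1 hv w hker
  have hiu : ⟪u, v⟫ = α := by
    rw [hu, hpvec, hα, real_inner_smul_left]
    simp only [inner_add_left, EuclideanSpace.inner_single_left, conj_trivial, Tb_apply]
  have hie : ⟪e3, v⟫ = β := by
    simp [he3, EuclideanSpace.inner_single_left, hβ]
  have hdecomp : v = w + α • u + β • e3 := by rw [hw]; module
  have hvv : ⟪v, v⟫ = α ^ 2 + β ^ 2 := by
    nth_rewrite 1 [hdecomp]
    rw [inner_add_left, inner_add_left, real_inner_smul_left, real_inner_smul_left,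
      hip, hiu, hie]
    ring
  have hAv : ‖Amap p v‖ = Real.sqrt (α ^ 2 + β ^ 2) := by
    rw [EuclideanSpace.norm_eq]
    congr 1
    rw [Fin.sum_univ_two, Amap_apply_zero, Amap_apply_one]
    simp only [Real.norm_eq_abs, sq_abs, hα, hβ, hrdef]
  rw [hAv, ← hvv, real_inner_self_eq_norm_sq, Real.sqrt_sq (norm_nonneg v)]

/-- On `U = {x ∈ ℝ⁴ : (x₁,x₂,x₃) ≠ (0,0,0)}`, the map
`φ(x) = (√(x₁² + x₂² + x₃²), x₄)` is a proper biharmonic Riemannian submersion: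
(i) at every `p ∈ U` the derivative `Dφ_p` is surjective and is an isometry on
`(ker Dφ_p)ᗮ`; (ii) each component satisfies `Δ(Δφᵢ) = 0` on `U`; and
(iii) the componentwise Laplacian `Δφ` is nonzero at every point of `U`. -/
theorem phiMap_is_proper_biharmonic_riemannian_submersion (p : EuclideanSpace ℝ (Fin 4))
    (hp : (p 0, p 1, p 2) ≠ ((0 : ℝ), (0 : ℝ), (0 : ℝ))) :
    (Function.Surjective (fderiv ℝ phiMap p) ∧
        ∀ v ∈ (LinearMap.ker (fderiv ℝ phiMap p).toLinearMap)ᗮ, ‖fderiv ℝ phiMap p v‖ = ‖v‖) ∧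
      (∀ i : Fin 2, eLaplacian (eLaplacian (fun y => phiMap y i)) p = 0) ∧
      (∃ i : Fin 2, eLaplacian (fun y => phiMap y i) p ≠ 0) := by
  have hq : qf p ≠ 0 := by
    intro h
    apply hp
    unfold qf at h
    have h0 : p 0 = 0 := by nlinarith [sq_nonneg (p 0), sq_nonneg (p 1), sq_nonneg (p 2)]
    have h1 : p 1 = 0 := by nlinarith [sq_nonneg (p 0), sq_nonneg (p 1), sq_nonneg (p 2)]
    have h2 : p 2 = 0 := by nlinarith [sq_nonneg (p 0), sq_nonneg (p 1), sq_nonneg (p 2)]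
    simp [h0, h1, h2]
  have hfun0 : (fun y : E4 => phiMap y 0) = fun y => Real.sqrt (qf y) := by
    funext y
    simp [phiMap, qf]
  have hfun1 : (fun y : E4 => phiMap y 1) = fun y => y 3 := by
    funext y
    simp [phiMap]
  refine ⟨?_, ?_, ?_⟩
  · rw [(hasFDerivAt_phiMap hq).fderiv]
    exact ⟨Amap_surjective hq, Amap_isometry hq⟩
  · intro i
    match i with
    | 0 =>
      rw [hfun0]
      exact eLaplacian_eLaplacian_sqrt_qf hq
    | 1 =>
      rw [hfun1]
      rw [show eLaplacian (fun y : E4 => y 3) = fun _ => (0:ℝ) from funext eLaplacian_coord3]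
      exact eLaplacian_zero p
  · refine ⟨0, ?_⟩
    rw [hfun0, eLaplacian_sqrt_qf hq]
    have := sqrt_qf_pos hq
    positivity
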